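/- arXiv:1308.5439 — 4 statements merged into one kernel-verified Lean document; each statement's English description precedes it below -/
import Mathlib

section
/- Let J ≤ n. Then for any choice of unit vectors η̂₁,…,η̂_J ∈ ℝⁿ there exists ξ ∈ ℝⁿ with ξ ≠ 0 such that |η̂ⱼ·ξ| = |η̂ₗ·ξ| for all 1 ≤ j, l ≤ J. -/
open Module in
/-- Auxiliary: fewer than `n` linear functionals on `ℝⁿ` have a common nonzero zero. -/
lemma aux_kernel (n m : ℕ) (hm : m < n) (v : Fin m → Fin n → ℝ) :
    ∃ ξ : Fin n → ℝ, ξ ≠ 0 ∧ ∀ k, ∑ i, v k i * ξ i = 0 := by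
  classical
  let f : (Fin n → ℝ) →ₗ[ℝ] (Fin m → ℝ) :=
    { toFun := fun ξ k => ∑ i, v k i * ξ i
      map_add' := by
        intro x y; funext k; simp [mul_add, Finset.sum_add_distrib]
      map_smul' := by
        intro c x; funext k; simp [Finset.mul_sum, mul_left_comm] }
  have hrank : finrank ℝ (LinearMap.range f) + finrank ℝ (LinearMap.ker f) =
      finrank ℝ (Fin n → ℝ) := LinearMap.finrank_range_add_finrank_ker f
  have h1 : finrank ℝ (LinearMap.range f) ≤ m := by
    simpa using (LinearMap.range f).finrank_le
  have h2 : 0 < finrank ℝ (LinearMap.ker f) := by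
    have : finrank ℝ (Fin n → ℝ) = n := by simp
    omega
  have : Nontrivial (LinearMap.ker f) := finrank_pos_iff.mp h2
  obtain ⟨⟨ξ, hξmem⟩, hξne⟩ := exists_ne (0 : LinearMap.ker f)
  refine ⟨ξ, ?_, ?_⟩
  · intro h; apply hξne; ext; simp [h]
  · intro k
    have := (LinearMap.mem_ker.mp hξmem)
    exact congrFun this k

/-- Converse of the ellipticity counting condition: for `J ≤ n` unit vectors
`η̂₁, …, η̂_J` in `ℝⁿ` there is a nonzero `ξ` on which all `|η̂ⱼ·ξ|` agree. -/
theorem stmt2 (n J : ℕ) (hn : 0 < n) (hJ : J ≤ n) (ηhat : Fin J → Fin n → ℝ)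
    (hunit : ∀ j, ∑ i, ηhat j i ^ 2 = 1) :
    ∃ ξ : Fin n → ℝ, ξ ≠ 0 ∧
      ∀ j l : Fin J, |∑ i, ηhat j i * ξ i| = |∑ i, ηhat l i * ξ i| := by
  classical
  match J, hJ with
  | 0, _ =>
      refine ⟨fun _ => 1, ?_, ?_⟩
      · intro h
        have := congrFun h ⟨0, hn⟩
        exact one_ne_zero this
      · intro j; exact j.elim0
  | (m+1), hJ =>
      obtain ⟨ξ, hξ, hker⟩ := aux_kernel n m (by omega)
        (fun k i => ηhat 0 i - ηhat k.succ i)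
      have key : ∀ j : Fin (m+1), ∑ i, ηhat j i * ξ i = ∑ i, ηhat 0 i * ξ i := by
        intro j
        rcases Fin.eq_zero_or_eq_succ j with h | ⟨k, rfl⟩
        · rw [h]
        · have := hker k
          have : ∑ i, (ηhat 0 i * ξ i - ηhat k.succ i * ξ i) = 0 := by
            simp only [sub_mul] at this ⊢; exact this
          rw [Finset.sum_sub_distrib] at this
          linarith
      exact ⟨ξ, hξ, fun j l => by rw [key j, key l]⟩
end

section
/- In ℝ³, take the four pairs (ρⱼ, ρⱼ^⊥) given by ρⱼ = e₃ with ρ₁^⊥ = e₁, ρ₂^⊥ = e₂, ρ₃^⊥ = (e₁+e₂)/√2 for j = 1,2,3, and (ρ₄, ρ₄^⊥) = (e₁, (e₂+e₃)/√2). Define φⱼ(ξ) = |ξ·ρⱼ|² + |ξ·ρⱼ^⊥|². Then for any ξ ∈ ℝ³, if φⱼ(ξ) = φₗ(ξ) for all 1 ≤ j < l ≤ 4, then ξ = 0. -/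
/-! `φ₁ = φ₂` forces `ξ₀² = ξ₁²`, and then `φ₁ = φ₃` forces `ξ₀ ξ₁ = 0`, so `ξ₀ = ξ₁ = 0`;
finally `φ₁ = φ₄` reads `ξ₂² = ξ₂² / 2`. -/

lemma div_sqrt_two_sq (x : ℝ) : (x / √2) ^ 2 = x ^ 2 / 2 := by
  rw [div_pow, Real.sq_sqrt zero_le_two]

lemma eq_zero_of_sq_eq_sq_of_sq_eq_half_add_sq {a b : ℝ} (hab : a ^ 2 = b ^ 2)
    (h : a ^ 2 = (a + b) ^ 2 / 2) : a = 0 ∧ b = 0 := by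
  have hmul : a * b = 0 := by nlinarith
  rcases mul_eq_zero.mp hmul with ha | hb
  · exact ⟨ha, pow_eq_zero_iff two_ne_zero |>.mp (by rw [← hab, ha]; ring)⟩
  · exact ⟨pow_eq_zero_iff two_ne_zero |>.mp (by rw [hab, hb]; ring), hb⟩

/-- The explicit choice of four direction pairs in `ℝ³` verifies the ellipticity
condition: if `φⱼ(ξ) = |ξ·ρⱼ|² + |ξ·ρⱼ^⊥|²` agree for all pairs `j, l`, then `ξ = 0`.
Here `ρ₁ = ρ₂ = ρ₃ = e₃`, `ρ₁^⊥ = e₁`, `ρ₂^⊥ = e₂`, `ρ₃^⊥ = (e₁+e₂)/√2`,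
`ρ₄ = e₁`, `ρ₄^⊥ = (e₂+e₃)/√2`. -/
theorem stmt3 (ξ : Fin 3 → ℝ) :
    ∀ φ : Fin 4 → ℝ,
      φ = ![ξ 2 ^ 2 + ξ 0 ^ 2,
            ξ 2 ^ 2 + ξ 1 ^ 2,
            ξ 2 ^ 2 + ((ξ 0 + ξ 1) / Real.sqrt 2) ^ 2,
            ξ 0 ^ 2 + ((ξ 1 + ξ 2) / Real.sqrt 2) ^ 2] →
      (∀ j l : Fin 4, φ j = φ l) → ξ = 0 := by
  rintro φ rfl h
  have h12 := h 0 1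
  have h13 := h 0 2
  have h14 := h 0 3
  simp only [Matrix.cons_val, div_sqrt_two_sq] at h12 h13 h14
  obtain ⟨h0, h1⟩ := eq_zero_of_sq_eq_sq_of_sq_eq_half_add_sq
    (a := ξ 0) (b := ξ 1) (by linarith) (by linarith)
  have h2 : ξ 2 = 0 := pow_eq_zero_iff two_ne_zero |>.mp (by rw [h0, h1] at h14; linarith)
  funext i
  fin_cases i
  exacts [h0, h1, h2]
end

section
/- Let ζ = −isρ + √(s²+k²) ρ^⊥ with ρ⊥ρ^⊥ unit vectors in ℝ³, let a = conj(ζ̂_∞) where ζ̂_∞ = (−iρ+ρ^⊥)/√2, and let b ∈ ℂ³. Define η_ζ = (1/|ζ|)(−(ζ·a)ζ − k ζ×b + k² a). Then ζ·η_ζ = 0 (complex bilinear) and |η_ζ + ζ| = o(s) as s → ∞. -/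
/-!
Both `ζ` and `a` are of the form `-i x ρ + y ρ^⊥` with `x, y` real, and by orthonormality the
bilinear product of two such vectors is `y y' - x x'`. Hence `ζ·ζ = k²`, and `ζ·η = 0` because
also `ζ·(ζ×b) = 0`. Writing `η + ζ = (1 - (ζ·a)/|ζ|) ζ - (k/|ζ|) ζ×b + (k²/|ζ|) a` with
`|ζ| = √(2s²+k²)`, `ζ·a = (s + √(s²+k²))/√2` and `|a| = 1`, each of the three terms is bounded by a
multiple of `|k|` for `s > 0`: `η + ζ` stays bounded, which is much more than `o(s)`.
-/

open Asymptotics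

/-- Complex cross product on `ℂ³`. -/
noncomputable def ccross (u v : Fin 3 → ℂ) : Fin 3 → ℂ :=
  ![u 1 * v 2 - u 2 * v 1, u 2 * v 0 - u 0 * v 2, u 0 * v 1 - u 1 * v 0]

open Matrix Complex

local notation "E3" => EuclideanSpace ℂ (Fin 3)

lemma sqrt_sum_norm_sq_eq_norm {ι : Type*} [Fintype ι] (v : ι → ℂ) :
    √(∑ i, ‖v i‖ ^ 2) = ‖(WithLp.toLp 2 v : EuclideanSpace ℂ ι)‖ :=
  (EuclideanSpace.norm_eq _).symm

lemma ccross_eq_cross (u v : Fin 3 → ℂ) : ccross u v = u ⨯₃ v := rfl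

noncomputable def cgoAmplitude (k : ℝ) (z a b : Fin 3 → ℂ) : Fin 3 → ℂ := fun i =>
  (1 / ((√(∑ j, ‖z j‖ ^ 2) : ℝ) : ℂ)) *
    (-(∑ j, z j * a j) * z i - (k : ℂ) * ccross z b i + (k : ℂ) ^ 2 * a i)

section OrthoComb

variable {ι : Type*} [Fintype ι] (ρ ρp : ι → ℝ)

/-- `ζ(s) = orthoComb ρ ρp s √(s²+k²)` and `a = orthoComb ρ ρp (-1/√2) (1/√2)`. -/
def orthoComb (x y : ℝ) : ι → ℂ := fun i => -I * (x : ℂ) * (ρ i : ℂ) + (y : ℂ) * (ρp i : ℂ)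

variable {ρ ρp}

lemma orthoComb_dotProduct (hρ : ∑ i, ρ i ^ 2 = 1) (hρp : ∑ i, ρp i ^ 2 = 1)
    (horth : ∑ i, ρ i * ρp i = 0) (x y x' y' : ℝ) :
    orthoComb ρ ρp x y ⬝ᵥ orthoComb ρ ρp x' y' = ((y * y' - x * x' : ℝ) : ℂ) := by
  have hρ' : ∑ i, (ρ i : ℂ) ^ 2 = 1 := by exact_mod_cast hρ
  have hρp' : ∑ i, (ρp i : ℂ) ^ 2 = 1 := by exact_mod_cast hρp
  have horth' : ∑ i, (ρ i : ℂ) * ρp i = 0 := by exact_mod_cast horth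
  have hexp : orthoComb ρ ρp x y ⬝ᵥ orthoComb ρ ρp x' y' =
      -(x * x' : ℂ) * ∑ i, (ρ i : ℂ) ^ 2 + (y * y' : ℂ) * ∑ i, (ρp i : ℂ) ^ 2
        - I * (x * y' + y * x' : ℂ) * ∑ i, (ρ i : ℂ) * ρp i := by
    simp only [dotProduct, orthoComb, Finset.mul_sum, ← Finset.sum_add_distrib,
      ← Finset.sum_sub_distrib]
    refine Finset.sum_congr rfl fun i _ => ?_
    linear_combination (x * x' * ρ i ^ 2 : ℂ) * I_sq
  rw [hexp, hρ', hρp', horth']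
  push_cast
  ring

lemma sum_norm_sq_orthoComb (hρ : ∑ i, ρ i ^ 2 = 1) (hρp : ∑ i, ρp i ^ 2 = 1) (x y : ℝ) :
    ∑ i, ‖orthoComb ρ ρp x y i‖ ^ 2 = x ^ 2 + y ^ 2 := by
  have hnorm : ∀ i, ‖orthoComb ρ ρp x y i‖ ^ 2 = x ^ 2 * ρ i ^ 2 + y ^ 2 * ρp i ^ 2 := by
    intro i
    rw [Complex.sq_norm, Complex.normSq_apply]
    simp only [orthoComb, neg_mul, add_re, neg_re, mul_re, I_re, ofReal_re, zero_mul, I_im,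
      ofReal_im, mul_zero, sub_self, mul_im, one_mul, zero_add, neg_zero, sub_zero, add_im, neg_im,
      add_zero, mul_neg, neg_neg]
    ring
  simp only [hnorm, Finset.sum_add_distrib, ← Finset.mul_sum, hρ, hρp, mul_one]

end OrthoComb

section CGOAmplitude

variable (k : ℝ) (z a b : Fin 3 → ℂ)

lemma cgoAmplitude_eq_smul :
    cgoAmplitude k z a b = (1 / (‖(WithLp.toLp 2 z : E3)‖ : ℂ)) •
      (-(z ⬝ᵥ a) • z - (k : ℂ) • z ⨯₃ b + (k : ℂ) ^ 2 • a) := by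
  ext i
  simp [cgoAmplitude, ccross_eq_cross, sqrt_sum_norm_sq_eq_norm, dotProduct]

lemma dotProduct_cgoAmplitude (h : z ⬝ᵥ z = (k : ℂ) ^ 2) : z ⬝ᵥ cgoAmplitude k z a b = 0 := by
  rw [cgoAmplitude_eq_smul]
  simp only [one_div, neg_smul, dotProduct_smul, dotProduct_add, dotProduct_sub, dotProduct_neg,
    h, smul_eq_mul, dot_self_cross, mul_zero, sub_zero]
  ring

lemma cgoAmplitude_add_self :
    cgoAmplitude k z a b + z = (1 - z ⬝ᵥ a / (‖(WithLp.toLp 2 z : E3)‖ : ℂ)) • z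
      - ((k : ℂ) / (‖(WithLp.toLp 2 z : E3)‖ : ℂ)) • z ⨯₃ b
      + ((k : ℂ) ^ 2 / (‖(WithLp.toLp 2 z : E3)‖ : ℂ)) • a := by
  rw [cgoAmplitude_eq_smul]
  ext i
  simp only [one_div, neg_smul, smul_add, Pi.add_apply, Pi.smul_apply, Pi.sub_apply,
    Pi.neg_apply, smul_eq_mul]
  ring

lemma norm_cgoAmplitude_add_self_le :
    ‖(WithLp.toLp 2 (cgoAmplitude k z a b + z) : E3)‖ ≤
      ‖(‖(WithLp.toLp 2 z : E3)‖ : ℂ) - z ⬝ᵥ a‖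
        + |k| / ‖(WithLp.toLp 2 z : E3)‖ * ‖(WithLp.toLp 2 (z ⨯₃ b) : E3)‖
        + k ^ 2 / ‖(WithLp.toLp 2 z : E3)‖ * ‖(WithLp.toLp 2 a : E3)‖ := by
  set Q := ‖(WithLp.toLp 2 z : E3)‖
  have hfirst : ‖(1 - z ⬝ᵥ a / (Q : ℂ))‖ * Q ≤ ‖(Q : ℂ) - z ⬝ᵥ a‖ := by
    rcases eq_or_ne Q 0 with hQ | hQ
    · rw [hQ, mul_zero]; positivity
    · have : (1 - z ⬝ᵥ a / (Q : ℂ)) * Q = Q - z ⬝ᵥ a := by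
        rw [sub_mul, div_mul_cancel₀ _ (ofReal_ne_zero.2 hQ), one_mul]
      rw [← this, norm_mul, norm_real, Real.norm_of_nonneg (norm_nonneg _)]
  rw [cgoAmplitude_add_self, WithLp.toLp_add, WithLp.toLp_sub, WithLp.toLp_smul,
    WithLp.toLp_smul, WithLp.toLp_smul]
  refine (norm_add_le _ _).trans (add_le_add ((norm_sub_le _ _).trans (add_le_add ?_ ?_)) ?_)
  · rw [norm_smul]; exact hfirst
  all_goals
    simp only [norm_smul, norm_div, norm_pow, Complex.norm_real, abs_norm, Real.norm_eq_abs, sq_abs]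
    exact le_rfl

end CGOAmplitude

lemma exists_norm_cross_le (b : Fin 3 → ℂ) :
    ∃ C, ∀ u : Fin 3 → ℂ, ‖(WithLp.toLp 2 (u ⨯₃ b) : E3)‖ ≤ C * ‖(WithLp.toLp 2 u : E3)‖ := by
  let L : E3 →ₗ[ℂ] E3 :=
    (WithLp.linearEquiv 2 ℂ (Fin 3 → ℂ)).symm.toLinearMap ∘ₗ crossProduct.flip b ∘ₗ
      (WithLp.linearEquiv 2 ℂ (Fin 3 → ℂ)).toLinearMap
  exact ⟨‖LinearMap.toContinuousLinearMap L‖,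
    fun u => (LinearMap.toContinuousLinearMap L).le_opNorm (WithLp.toLp 2 u)⟩

-- Both terms lie in the interval `[√2 s, √2 s + |k|]`.
lemma abs_sqrt_two_mul_sq_add_sq_sub_le {k s : ℝ} (hs : 0 ≤ s) :
    |√(2 * s ^ 2 + k ^ 2) - (s + √(s ^ 2 + k ^ 2)) / √2| ≤ |k| := by
  have h2 : √2 * √2 = 2 := Real.mul_self_sqrt (by norm_num)
  have h2p : 0 < √2 := by positivity
  have h21 : 1 ≤ √2 := Real.one_le_sqrt.2 (by norm_num)
  have hk := abs_nonneg k
  have hqlo : √2 * s ≤ √(2 * s ^ 2 + k ^ 2) :=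
    Real.le_sqrt_of_sq_le (by nlinarith)
  have hqhi : √(2 * s ^ 2 + k ^ 2) ≤ √2 * s + |k| :=
    Real.sqrt_le_iff.2 ⟨by positivity, by nlinarith [mul_nonneg (mul_nonneg h2p.le hs) hk, sq_abs k]⟩
  have hrlo : s ≤ √(s ^ 2 + k ^ 2) := Real.le_sqrt_of_sq_le (by nlinarith)
  have hrhi : √(s ^ 2 + k ^ 2) ≤ s + |k| :=
    Real.sqrt_le_iff.2 ⟨by positivity, by nlinarith [mul_nonneg hs hk, sq_abs k]⟩
  have hwlo : √2 * s ≤ (s + √(s ^ 2 + k ^ 2)) / √2 := by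
    rw [le_div_iff₀ h2p]; nlinarith
  have hwhi : (s + √(s ^ 2 + k ^ 2)) / √2 ≤ √2 * s + |k| := by
    rw [div_le_iff₀ h2p]; nlinarith
  rw [abs_sub_le_iff]
  constructor <;> linarith

lemma exists_norm_cgoAmplitude_add_le {ρ ρp : Fin 3 → ℝ} (hρ : ∑ i, ρ i ^ 2 = 1)
    (hρp : ∑ i, ρp i ^ 2 = 1) (horth : ∑ i, ρ i * ρp i = 0) (k : ℝ) (b : Fin 3 → ℂ) :
    ∃ M, ∀ s : ℝ, 0 < s →
      ‖(WithLp.toLp 2 (cgoAmplitude k (orthoComb ρ ρp s √(s ^ 2 + k ^ 2))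
          (orthoComb ρ ρp (-(√2)⁻¹) (√2)⁻¹) b + orthoComb ρ ρp s √(s ^ 2 + k ^ 2)) :
          E3)‖ ≤ M := by
  obtain ⟨C, hC⟩ := exists_norm_cross_le b
  refine ⟨|k| * (2 + C), fun s hs => ?_⟩
  set z := orthoComb ρ ρp s √(s ^ 2 + k ^ 2)
  set a := orthoComb ρ ρp (-(√2)⁻¹) (√2)⁻¹
  have hr : √(s ^ 2 + k ^ 2) ^ 2 = s ^ 2 + k ^ 2 := Real.sq_sqrt (by positivity)
  have hz : ‖(WithLp.toLp 2 z : E3)‖ = √(2 * s ^ 2 + k ^ 2) := by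
    rw [← sqrt_sum_norm_sq_eq_norm, sum_norm_sq_orthoComb hρ hρp, hr]
    ring_nf
  have ha : ‖(WithLp.toLp 2 a : E3)‖ = 1 := by
    rw [← sqrt_sum_norm_sq_eq_norm, sum_norm_sq_orthoComb hρ hρp]
    norm_num
  have hza : z ⬝ᵥ a = (((s + √(s ^ 2 + k ^ 2)) / √2 : ℝ) : ℂ) := by
    rw [orthoComb_dotProduct hρ hρp horth]
    congr 1
    ring
  have hzpos : 0 < √(2 * s ^ 2 + k ^ 2) := Real.sqrt_pos.2 (by positivity)
  have hzk : |k| ≤ √(2 * s ^ 2 + k ^ 2) := by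
    rw [← Real.sqrt_sq_eq_abs]
    exact Real.sqrt_le_sqrt (by nlinarith)
  refine (norm_cgoAmplitude_add_self_le k z a b).trans ?_
  rw [hz, ha, hza, ← ofReal_sub, norm_real, Real.norm_eq_abs, mul_one]
  have hcross : |k| / √(2 * s ^ 2 + k ^ 2) * ‖(WithLp.toLp 2 (z ⨯₃ b) : E3)‖ ≤ |k| * C := by
    calc _ ≤ |k| / √(2 * s ^ 2 + k ^ 2) * (C * √(2 * s ^ 2 + k ^ 2)) := by
          gcongr; exact hz ▸ hC z
      _ = |k| * C := by field_simp
  have hsq_div : k ^ 2 / √(2 * s ^ 2 + k ^ 2) ≤ |k| :=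
    div_le_of_le_mul₀ hzpos.le (abs_nonneg k) (by nlinarith [abs_mul_abs_self k, abs_nonneg k])
  linarith [abs_sqrt_two_mul_sq_add_sq_sub_le (k := k) hs.le]

theorem stmt7_general (k : ℝ) (ρ ρp : Fin 3 → ℝ)
    (hρ : ∑ i, ρ i ^ 2 = 1) (hρp : ∑ i, ρp i ^ 2 = 1)
    (horth : ∑ i, ρ i * ρp i = 0) (b : Fin 3 → ℂ) :
    ∀ ζ : ℝ → Fin 3 → ℂ,
      ζ = (fun (s : ℝ) (i : Fin 3) => -Complex.I * (s : ℂ) * (ρ i : ℂ)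
            + ((Real.sqrt (s ^ 2 + k ^ 2) : ℝ) : ℂ) * (ρp i : ℂ)) →
    ∀ a : Fin 3 → ℂ,
      a = (fun i => (starRingEnd ℂ)
            ((-Complex.I * (ρ i : ℂ) + (ρp i : ℂ)) / ((Real.sqrt 2 : ℝ) : ℂ))) →
    ∀ η : ℝ → Fin 3 → ℂ,
      η = (fun (s : ℝ) (i : Fin 3) =>
            (1 / ((Real.sqrt (∑ j, ‖ζ s j‖ ^ 2) : ℝ) : ℂ)) *
              (-(∑ j, ζ s j * a j) * ζ s i - (k : ℂ) * ccross (ζ s) b i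
                + (k : ℂ) ^ 2 * a i)) →
      ((∀ s : ℝ, 0 < s → ∑ i, ζ s i * η s i = 0) ∧
       (fun s : ℝ => Real.sqrt (∑ i, ‖η s i + ζ s i‖ ^ 2))
         =o[Filter.atTop] (fun s : ℝ => s)) := by
  intro ζ hζ a ha η hη
  have ha' : a = orthoComb ρ ρp (-(√2)⁻¹) (√2)⁻¹ := by
    subst ha
    ext i
    simp only [orthoComb, map_div₀, map_add, map_neg, map_mul, conj_I, conj_ofReal, ofReal_neg,
      ofReal_inv]
    ring
  have hζ' : ζ = fun s => orthoComb ρ ρp s √(s ^ 2 + k ^ 2) := hζ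
  have hη' : η = fun s => cgoAmplitude k (ζ s) a b := hη
  subst hη' ha' hζ'
  constructor
  · intro s _
    apply dotProduct_cgoAmplitude
    rw [orthoComb_dotProduct hρ hρp horth, Real.mul_self_sqrt (by positivity)]
    push_cast
    ring
  · obtain ⟨M, hM⟩ := exists_norm_cgoAmplitude_add_le hρ hρp horth k b
    refine (IsBigO.of_bound M ?_).trans_isLittleO (isLittleO_const_id_atTop (1 : ℝ))
    filter_upwards [Filter.eventually_gt_atTop 0] with s hs
    rw [norm_one, mul_one, Real.norm_of_nonneg (Real.sqrt_nonneg _)]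
    exact (sqrt_sum_norm_sq_eq_norm _).trans_le (hM s hs)

/-- The CGO amplitude `η_ζ = (1/|ζ|)(−(ζ·a)ζ − k ζ×b + k² a)` with
`a = conj ζ̂_∞`, `ζ̂_∞ = (−iρ+ρ^⊥)/√2`, satisfies `ζ·η_ζ = 0` and
`|η_ζ + ζ| = o(s)` as `s → ∞`. -/
theorem stmt7 (k : ℝ) (hk : 0 < k) (ρ ρp : Fin 3 → ℝ)
    (hρ : ∑ i, ρ i ^ 2 = 1) (hρp : ∑ i, ρp i ^ 2 = 1)
    (horth : ∑ i, ρ i * ρp i = 0) (b : Fin 3 → ℂ) :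
    ∀ ζ : ℝ → Fin 3 → ℂ,
      ζ = (fun (s : ℝ) (i : Fin 3) => -Complex.I * (s : ℂ) * (ρ i : ℂ)
            + ((Real.sqrt (s ^ 2 + k ^ 2) : ℝ) : ℂ) * (ρp i : ℂ)) →
    ∀ a : Fin 3 → ℂ,
      a = (fun i => (starRingEnd ℂ)
            ((-Complex.I * (ρ i : ℂ) + (ρp i : ℂ)) / ((Real.sqrt 2 : ℝ) : ℂ))) →
    ∀ η : ℝ → Fin 3 → ℂ,
      η = (fun (s : ℝ) (i : Fin 3) =>
            (1 / ((Real.sqrt (∑ j, ‖ζ s j‖ ^ 2) : ℝ) : ℂ)) *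
              (-(∑ j, ζ s j * a j) * ζ s i - (k : ℂ) * ccross (ζ s) b i
                + (k : ℂ) ^ 2 * a i)) →
      ((∀ s : ℝ, 0 < s → ∑ i, ζ s i * η s i = 0) ∧
       (fun s : ℝ => Real.sqrt (∑ i, ‖η s i + ζ s i‖ ^ 2))
         =o[Filter.atTop] (fun s : ℝ => s)) :=
  stmt7_general k ρ ρp hρ hρp horth b
end

section
/- Let γ ∈ C²(ℝⁿ;ℂ) be nowhere zero with a chosen branch of square root γ^{1/2}, and set α = dγ/γ and 𝔮 = ¼⟨α,α⟩ − ½δα. Then for any constant ζ ∈ ℂⁿ and any C² 1-form R: γ^{1/2} ∘ (−(Δ_H + 2(iζ∨d) + (α∨d̃))) ∘ γ^{−1/2} applied to R equals (−Δ_H − 2(iζ∨d) + 𝔮)R, i.e. conjugation by γ^{1/2} removes the first-order term α∨d̃ at the price of the zeroth-order potential 𝔮. -/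
/-!
Write `R = g v` with `g² = γ`. Then `α = 2 dg / g`, and the Riccati identity
`¼ αⱼ² + ½ ∂ⱼαⱼ = ∂ⱼ²g / g` gives `𝔮 R = v Σⱼ ∂ⱼ²g`: exactly the term by which `∂ⱼ²(g v)`
differs from `g ∂ⱼ²v + 2 ∂ⱼg ∂ⱼv`. The remaining cross terms `2 ∂ⱼg ∂ⱼv` and `2i ζⱼ v ∂ⱼg`
come on the left from `g αⱼ = 2 ∂ⱼg` and on the right from the Leibniz rule for `∂ⱼ(g v)`.
-/

/-- Partial derivative in the `i`-th coordinate direction. -/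
noncomputable def pd (n : ℕ) (i : Fin n) (f : (Fin n → ℝ) → ℂ) (x : Fin n → ℝ) : ℂ :=
  fderiv ℝ f x (Pi.single i 1)

section PartialDerivative

variable {n : ℕ} {f h g : (Fin n → ℝ) → ℂ} {x : Fin n → ℝ} (j : Fin n)

lemma pd_add (hf : DifferentiableAt ℝ f x) (hh : DifferentiableAt ℝ h x) :
    pd n j (fun y => f y + h y) x = pd n j f x + pd n j h x := by
  simp [pd, fderiv_fun_add hf hh]

lemma pd_mul (hf : DifferentiableAt ℝ f x) (hh : DifferentiableAt ℝ h x) :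
    pd n j (fun y => f y * h y) x = pd n j f x * h x + f x * pd n j h x := by
  simp only [pd, fderiv_fun_mul hf hh, add_apply,
    smul_apply, smul_eq_mul]
  ring

lemma pd_const_mul (c : ℂ) (hf : DifferentiableAt ℝ f x) :
    pd n j (fun y => c * f y) x = c * pd n j f x := by
  simp [pd, fderiv_const_mul hf]

lemma pd_div (hf : DifferentiableAt ℝ f x) (hh : DifferentiableAt ℝ h x)
    (hh0 : ∀ y, h y ≠ 0) :
    pd n j (fun y => f y / h y) x = (pd n j f x * h x - f x * pd n j h x) / h x ^ 2 := by
  have hq : DifferentiableAt ℝ (fun y => f y / h y) x := by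
    simpa only [div_eq_mul_inv, Pi.inv_apply] using hf.fun_mul (hh.inv (hh0 x))
  have hprod := pd_mul j hq hh
  simp only [div_mul_cancel₀ _ (hh0 _)] at hprod
  have := hh0 x
  field_simp at hprod
  rw [eq_div_iff (pow_ne_zero 2 this)]
  linear_combination -hprod

lemma pd_sq_div_sq (hg : DifferentiableAt ℝ g x) (hx : g x ≠ 0) :
    pd n j (fun y => g y ^ 2) x / g x ^ 2 = 2 * pd n j g x / g x := by
  simp only [sq, pd_mul j hg hg]
  field_simp
  ring

lemma ContDiff.differentiable_pd (hf : ContDiff ℝ 2 f) :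
    Differentiable ℝ (fun y => pd n j f y) :=
  ((hf.fderiv_right (m := 1) le_rfl).clm_apply contDiff_const).differentiable one_ne_zero

lemma pd_pd_mul (hf : ContDiff ℝ 2 f) (hh : ContDiff ℝ 2 h) :
    pd n j (fun y => pd n j (fun z => f z * h z) y) x
      = pd n j (fun y => pd n j f y) x * h x + 2 * pd n j f x * pd n j h x
        + f x * pd n j (fun y => pd n j h y) x := by
  have Df := hf.differentiable two_ne_zero
  have Dh := hh.differentiable two_ne_zero
  have Dpf := hf.differentiable_pd j
  have Dph := hh.differentiable_pd j
  have hfirst : (fun y => pd n j (fun z => f z * h z) y)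
      = fun y => pd n j f y * h y + f y * pd n j h y :=
    funext fun y => pd_mul j (Df y) (Dh y)
  rw [hfirst, pd_add j ((Dpf x).fun_mul (Dh x)) ((Df x).fun_mul (Dph x)),
    pd_mul j (Dpf x) (Dh x), pd_mul j (Df x) (Dph x)]
  ring

lemma pd_pd_div_self_eq (hg : ContDiff ℝ 2 g) (hg0 : ∀ y, g y ≠ 0) :
    pd n j (fun y => pd n j g y) x / g x
      = 1 / 4 * (2 * pd n j g x / g x) ^ 2
        + 1 / 2 * pd n j (fun y => 2 * pd n j g y / g y) x := by
  have Dg := hg.differentiable two_ne_zero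
  have Dpg := hg.differentiable_pd j
  rw [pd_div j ((Dpg x).const_mul 2) (Dg x) hg0, pd_const_mul j 2 (Dpg x)]
  have := hg0 x
  field_simp
  ring

end PartialDerivative

section Conjugation

variable {n : ℕ} {r g : (Fin n → ℝ) → ℂ} {x : Fin n → ℝ}

lemma liouville_conj_single (c : ℂ) (j : Fin n) (hr : ContDiff ℝ 2 r) (hg : ContDiff ℝ 2 g)
    (hg0 : ∀ y, g y ≠ 0) :
    g x * (-pd n j (fun y => pd n j (fun z => r z / g z) y) x
        - 2 * Complex.I * (c * pd n j (fun z => r z / g z) x)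
        - 2 * pd n j g x / g x * (pd n j (fun z => r z / g z) x + Complex.I * c * (r x / g x)))
      = -pd n j (fun y => pd n j r y) x - 2 * Complex.I * (c * pd n j r x)
        + pd n j (fun y => pd n j g y) x / g x * r x := by
  obtain ⟨v, hv, rfl⟩ : ∃ v, ContDiff ℝ 2 v ∧ r = fun z => g z * v z :=
    ⟨fun z => r z / g z, by simpa only [div_eq_mul_inv, Pi.inv_apply] using hr.mul (hg.inv hg0),
      funext fun z => (mul_div_cancel₀ _ (hg0 z)).symm⟩
  have hcancel : ∀ z, g z * v z / g z = v z := fun z => mul_div_cancel_left₀ _ (hg0 z)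
  simp only [hcancel, pd_pd_mul j hg hv,
    pd_mul j ((hg.differentiable two_ne_zero) x) ((hv.differentiable two_ne_zero) x)]
  have := hg0 x
  field_simp
  ring

lemma liouville_conj (ζ : Fin n → ℂ) (hr : ContDiff ℝ 2 r) (hg : ContDiff ℝ 2 g)
    (hg0 : ∀ y, g y ≠ 0) :
    g x * (-(∑ j, pd n j (fun y => pd n j (fun z => r z / g z) y) x)
        - 2 * Complex.I * (∑ j, ζ j * pd n j (fun z => r z / g z) x)
        - (∑ j, 2 * pd n j g x / g x * (pd n j (fun z => r z / g z) x
            + Complex.I * ζ j * (r x / g x))))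
      = -(∑ j, pd n j (fun y => pd n j r y) x)
        - 2 * Complex.I * (∑ j, ζ j * pd n j r x)
        + (∑ j, pd n j (fun y => pd n j g y) x / g x) * r x := by
  simp only [mul_sub, mul_neg, Finset.mul_sum, Finset.sum_mul, ← Finset.sum_neg_distrib,
    ← Finset.sum_sub_distrib, ← Finset.sum_add_distrib]
  refine Finset.sum_congr rfl fun j _ => ?_
  rw [← liouville_conj_single (ζ j) j hr hg hg0]
  ring

end Conjugation

theorem stmt17_general (n : ℕ) (ζ : Fin n → ℂ) (γ g : (Fin n → ℝ) → ℂ)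
    (hg : ContDiff ℝ 2 g) (hγ0 : ∀ x, γ x ≠ 0)
    (hbranch : ∀ x, g x ^ 2 = γ x)
    (R : (Fin n → ℝ) → Fin n → ℂ) (hR : ∀ k, ContDiff ℝ 2 (fun x => R x k)) :
    ∀ α : (Fin n → ℝ) → Fin n → ℂ, α = (fun x j => pd n j γ x / γ x) →
    ∀ qf : (Fin n → ℝ) → ℂ,
      qf = (fun x => (1 / 4) * (∑ j, α x j ^ 2)
            + (1 / 2) * ∑ j, pd n j (fun y => α y j) x) →
    ∀ x, ∀ k : Fin n,
      g x * ( -(∑ j, pd n j (fun y => pd n j (fun z => R z k / g z) y) x)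
        - 2 * Complex.I * (∑ j, ζ j * pd n j (fun z => R z k / g z) x)
        - (∑ j, α x j * (pd n j (fun z => R z k / g z) x
            + Complex.I * ζ j * (R x k / g x))) )
      = -(∑ j, pd n j (fun y => pd n j (fun z => R z k) y) x)
        - 2 * Complex.I * (∑ j, ζ j * pd n j (fun z => R z k) x)
        + qf x * R x k := by
  rintro α rfl qf rfl x k
  have hg0 : ∀ y, g y ≠ 0 := fun y hy => hγ0 y (by rw [← hbranch y, hy]; ring)
  have hγ : γ = fun y => g y ^ 2 := funext fun y => (hbranch y).symm
  have hα : ∀ y j, pd n j γ y / γ y = 2 * pd n j g y / g y := fun y j => by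
    rw [hγ]; exact pd_sq_div_sq j ((hg.differentiable two_ne_zero) y) (hg0 y)
  simp only [hα, Finset.mul_sum _ _ (1 / 4 : ℂ), Finset.mul_sum _ _ (1 / 2 : ℂ),
    ← Finset.sum_add_distrib, ← pd_pd_div_self_eq _ hg hg0]
  exact liouville_conj ζ (hR k) hg hg0

/-- Liouville-type transformation: with `γ` nowhere zero, a `C²` branch `g = γ^{1/2}`
(`g² = γ`), `α = dγ/γ` and `𝔮 = ¼⟨α,α⟩ − ½δα = ¼Σαⱼ² + ½Σ∂ⱼαⱼ`, conjugation of
`−(Δ_H + 2(iζ∨d) + (α∨d̃))` by `γ^{1/2}` equals `−Δ_H − 2(iζ∨d) + 𝔮`, componentwise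
on `C²` 1-forms `R`. -/
theorem stmt17 (n : ℕ) (ζ : Fin n → ℂ) (γ g : (Fin n → ℝ) → ℂ)
    (hγ : ContDiff ℝ 2 γ) (hg : ContDiff ℝ 2 g) (hγ0 : ∀ x, γ x ≠ 0)
    (hbranch : ∀ x, g x ^ 2 = γ x)
    (R : (Fin n → ℝ) → Fin n → ℂ) (hR : ∀ k, ContDiff ℝ 2 (fun x => R x k)) :
    ∀ α : (Fin n → ℝ) → Fin n → ℂ, α = (fun x j => pd n j γ x / γ x) →
    ∀ qf : (Fin n → ℝ) → ℂ,
      qf = (fun x => (1 / 4) * (∑ j, α x j ^ 2)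
            + (1 / 2) * ∑ j, pd n j (fun y => α y j) x) →
    ∀ x, ∀ k : Fin n,
      g x * ( -(∑ j, pd n j (fun y => pd n j (fun z => R z k / g z) y) x)
        - 2 * Complex.I * (∑ j, ζ j * pd n j (fun z => R z k / g z) x)
        - (∑ j, α x j * (pd n j (fun z => R z k / g z) x
            + Complex.I * ζ j * (R x k / g x))) )
      = -(∑ j, pd n j (fun y => pd n j (fun z => R z k) y) x)
        - 2 * Complex.I * (∑ j, ζ j * pd n j (fun z => R z k) x)
        + qf x * R x k :=
  stmt17_general n ζ γ g hg hγ0 hbranch R hR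
end
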